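/- Let (L, α_L) and (M, α_M) be hom-Lie-Rinehart algebras over (A, φ) with compatible quasi hom-actions on each other. Then the map f: L × M → L ∗ M given by f(x,m) = x ∗ m is a universal hom-Lie-Rinehart pairing: it is a hom-Lie-Rinehart pairing into (L ∗ M, α_{L∗M}), and for every hom-Lie-Rinehart pairing g: L × M → N into a hom-Lie-Rinehart algebra (N, α_N) over (A, φ) there exists a unique homomorphism Φ: (L ∗ M, α_{L∗M}) → (N, α_N) over (A, φ) with Φ ∘ f = g. -/

import Mathlib

open TensorProduct Function Set

/-- A hom-Lie-Rinehart algebra structure over `(A, φ)` on the `A`-module `L`. -/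
structure HLR (R A : Type) [CommRing R] [CommRing A] [Algebra R A]
    (φ : A →ₐ[R] A) (L : Type) [AddCommGroup L] [Module R L]
    [Module A L] [IsScalarTower R A L] : Type where
  bracket : L → L → L
  add_left : ∀ x y z, bracket (x + y) z = bracket x z + bracket y z
  add_right : ∀ x y z, bracket x (y + z) = bracket x y + bracket x z
  smul_left : ∀ (r : R) (x y : L), bracket (r • x) y = r • bracket x y
  smul_right : ∀ (r : R) (x y : L), bracket x (r • y) = r • bracket x y
  skew : ∀ x y, bracket x y = - bracket y x
  alpha : L → L
  alpha_add : ∀ x y, alpha (x + y) = alpha x + alpha y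
  alpha_smulR : ∀ (r : R) (x : L), alpha (r • x) = r • alpha x
  rho : L → A → A
  rho_add_left : ∀ x y a, rho (x + y) a = rho x a + rho y a
  rho_smulR_left : ∀ (r : R) (x : L) (a : A), rho (r • x) a = r • rho x a
  rho_add_right : ∀ (x : L) (a b : A), rho x (a + b) = rho x a + rho x b
  rho_smulR_right : ∀ (x : L) (r : R) (a : A), rho x (r • a) = r • rho x a
  rho_deriv : ∀ (x : L) (a b : A), rho x (a * b) = φ a * rho x b + φ b * rho x a
  alpha_bracket : ∀ x y, alpha (bracket x y) = bracket (alpha x) (alpha y)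
  hom_jacobi : ∀ x y z, bracket (alpha x) (bracket y z)
      + bracket (alpha y) (bracket z x) + bracket (alpha z) (bracket x y) = 0
  alpha_smulA : ∀ (a : A) (x : L), alpha (a • x) = φ a • alpha x
  rho_alpha : ∀ (x : L) (a : A), rho (alpha x) (φ a) = φ (rho x a)
  rho_bracket : ∀ (x y : L) (a : A), rho (bracket x y) (φ a)
      = rho (alpha x) (rho y a) - rho (alpha y) (rho x a)
  rho_smulA : ∀ (a : A) (x : L) (b : A), rho (a • x) b = φ a * rho x b
  leibniz : ∀ (x : L) (a : A) (y : L),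
      bracket x (a • y) = φ a • bracket x y + rho x a • alpha y

section Defs

variable {R A : Type} [CommRing R] [CommRing A] [Algebra R A] {φ : A →ₐ[R] A}

/-- Homomorphism of hom-Lie-Rinehart algebras over `(A, φ)`: an `A`-linear map
preserving brackets, the twist maps and the anchors. -/
def IsHLRHom {K L : Type}
    [AddCommGroup K] [Module R K] [Module A K] [IsScalarTower R A K]
    [AddCommGroup L] [Module R L] [Module A L] [IsScalarTower R A L]
    (SK : HLR R A φ K) (SL : HLR R A φ L) (f : K → L) : Prop :=
  (∀ x y, f (x + y) = f x + f y) ∧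
  (∀ (a : A) (x : K), f (a • x) = a • f x) ∧
  (∀ x y, f (SK.bracket x y) = SL.bracket (f x) (f y)) ∧
  (∀ x, f (SK.alpha x) = SL.alpha (f x)) ∧
  (∀ (x : K) (a : A), SL.rho (f x) a = SK.rho x a)

/-- The center `Z_A(L)` of a hom-Lie-Rinehart algebra. -/
def HLR.center {L : Type}
    [AddCommGroup L] [Module R L] [Module A L] [IsScalarTower R A L]
    (S : HLR R A φ L) : Set L :=
  {x | ∀ (a : A) (z : L),
    S.bracket (a • x) z = 0 ∧ S.bracket (a • S.alpha x) z = 0 ∧ S.rho x a = 0}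

/-- `(M, i) → (K, σ)` is a central extension of `L`. -/
def IsCentralExt {M K L : Type}
    [AddCommGroup M] [Module R M] [Module A M] [IsScalarTower R A M]
    [AddCommGroup K] [Module R K] [Module A K] [IsScalarTower R A K]
    [AddCommGroup L] [Module R L] [Module A L] [IsScalarTower R A L]
    (SM : HLR R A φ M) (SK : HLR R A φ K) (SL : HLR R A φ L)
    (i : M → K) (σ : K → L) : Prop :=
  IsHLRHom SM SK i ∧ IsHLRHom SK SL σ ∧ Function.Injective i ∧
  Function.Surjective σ ∧ Set.range i = {k | σ k = 0} ∧
  {k | σ k = 0} ⊆ SK.center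

/-- `(M, i) → (K, σ)` is an `α`-central extension of `L`. -/
def IsAlphaCentralExt {M K L : Type}
    [AddCommGroup M] [Module R M] [Module A M] [IsScalarTower R A M]
    [AddCommGroup K] [Module R K] [Module A K] [IsScalarTower R A K]
    [AddCommGroup L] [Module R L] [Module A L] [IsScalarTower R A L]
    (SM : HLR R A φ M) (SK : HLR R A φ K) (SL : HLR R A φ L)
    (i : M → K) (σ : K → L) : Prop :=
  IsHLRHom SM SK i ∧ IsHLRHom SK SL σ ∧ Function.Injective i ∧
  Function.Surjective σ ∧ Set.range i = {k | σ k = 0} ∧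
  (∀ m : M, i (SM.alpha m) ∈ SK.center)

/-- A hom-Lie-Rinehart algebra is perfect if `L = {L, L}`, the `A`-submodule
generated by all brackets. -/
def HLR.IsPerfect {L : Type}
    [AddCommGroup L] [Module R L] [Module A L] [IsScalarTower R A L]
    (S : HLR R A φ L) : Prop :=
  Submodule.span A {z : L | ∃ x y, z = S.bracket x y} = ⊤

/-- A hom-Lie-Rinehart algebra is `α`-perfect if `L = {α_L(L), α_L(L)}`. -/
def HLR.IsAlphaPerfect {L : Type}
    [AddCommGroup L] [Module R L] [Module A L] [IsScalarTower R A L]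
    (S : HLR R A φ L) : Prop :=
  Submodule.span A {z : L | ∃ x y, z = S.bracket (S.alpha x) (S.alpha y)} = ⊤

/-- Universal central extension. -/
def IsUniversalCentralExt {M K L : Type}
    [AddCommGroup M] [Module R M] [Module A M] [IsScalarTower R A M]
    [AddCommGroup K] [Module R K] [Module A K] [IsScalarTower R A K]
    [AddCommGroup L] [Module R L] [Module A L] [IsScalarTower R A L]
    (SM : HLR R A φ M) (SK : HLR R A φ K) (SL : HLR R A φ L)
    (i : M → K) (σ : K → L) : Prop :=
  IsCentralExt SM SK SL i σ ∧
  ∀ (M' L' : Type)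
    [AddCommGroup M'] [Module R M'] [Module A M'] [IsScalarTower R A M']
    [AddCommGroup L'] [Module R L'] [Module A L'] [IsScalarTower R A L']
    (SM' : HLR R A φ M') (SL' : HLR R A φ L') (j : M' → L') (τ : L' → L),
    IsCentralExt SM' SL' SL j τ →
    ∃! h : K → L', IsHLRHom SK SL' h ∧ ∀ x, τ (h x) = σ x

/-- Universal `α`-central extension. -/
def IsUniversalAlphaCentralExt {M K L : Type}
    [AddCommGroup M] [Module R M] [Module A M] [IsScalarTower R A M]
    [AddCommGroup K] [Module R K] [Module A K] [IsScalarTower R A K]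
    [AddCommGroup L] [Module R L] [Module A L] [IsScalarTower R A L]
    (SM : HLR R A φ M) (SK : HLR R A φ K) (SL : HLR R A φ L)
    (i : M → K) (σ : K → L) : Prop :=
  IsCentralExt SM SK SL i σ ∧
  ∀ (M' L' : Type)
    [AddCommGroup M'] [Module R M'] [Module A M'] [IsScalarTower R A M']
    [AddCommGroup L'] [Module R L'] [Module A L'] [IsScalarTower R A L']
    (SM' : HLR R A φ M') (SL' : HLR R A φ L') (j : M' → L') (τ : L' → L),
    IsAlphaCentralExt SM' SL' SL j τ →
    ∃! h : K → L', IsHLRHom SK SL' h ∧ ∀ x, τ (h x) = σ x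

end Defs

section UceDefs

variable {R A : Type} [CommRing R] [CommRing A] [Algebra R A] (φ : A →ₐ[R] A)
variable {L : Type} [AddCommGroup L] [Module R L] [Module A L] [IsScalarTower R A L]

/-- The `A`-submodule `M^φ_A L` of `A ⊗ L ⊗ L` of defining relations of `uce^φ_A L`. -/
def uceRel (S : HLR R A φ L) : Submodule A (A ⊗[R] (L ⊗[R] L)) :=
  Submodule.span A
    ({t | ∃ (a : A) (x : L), t = a ⊗ₜ[R] (x ⊗ₜ[R] x)} ∪
     {t | ∃ (a : A) (x y : L), t = a ⊗ₜ[R] (x ⊗ₜ[R] y) + a ⊗ₜ[R] (y ⊗ₜ[R] x)} ∪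
     {t | ∃ (a : A) (x y z : L), t =
        a ⊗ₜ[R] (S.alpha x ⊗ₜ[R] S.bracket y z)
          + a ⊗ₜ[R] (S.alpha y ⊗ₜ[R] S.bracket z x)
          + a ⊗ₜ[R] (S.alpha z ⊗ₜ[R] S.bracket x y)} ∪
     {t | ∃ (a : A) (x y x' y' : L), t =
        φ a ⊗ₜ[R] (S.bracket x y ⊗ₜ[R] S.bracket x' y')
          + S.rho (S.bracket x y) a ⊗ₜ[R] (S.alpha x' ⊗ₜ[R] S.alpha y')
          - (1 : A) ⊗ₜ[R] (S.bracket x y ⊗ₜ[R] (a • S.bracket x' y'))})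

/-- The underlying `A`-module of `uce^φ_A L`. -/
abbrev UCE (S : HLR R A φ L) : Type := (A ⊗[R] (L ⊗[R] L)) ⧸ uceRel φ S

/-- The coset `(a, x, y)` in `uce^φ_A L`. -/
noncomputable def uceMk (S : HLR R A φ L) (a : A) (x y : L) : UCE φ S :=
  Submodule.Quotient.mk (a ⊗ₜ[R] (x ⊗ₜ[R] y))

/-- `U` is the hom-Lie-Rinehart structure of `uce^φ_A L`: its bracket, twist map and anchor
are given by the defining formulas on cosets. -/
def IsUceStructure (S : HLR R A φ L) (U : HLR R A φ (UCE φ S)) : Prop :=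
  (∀ (a₁ a₂ : A) (x₁ y₁ x₂ y₂ : L),
    U.bracket (uceMk φ S a₁ x₁ y₁) (uceMk φ S a₂ x₂ y₂) =
      uceMk φ S (φ (a₁ * a₂)) (S.bracket x₁ y₁) (S.bracket x₂ y₂)
      + uceMk φ S (φ a₁ * S.rho (S.bracket x₁ y₁) a₂) (S.alpha x₂) (S.alpha y₂)
      - uceMk φ S (φ a₂ * S.rho (S.bracket x₂ y₂) a₁) (S.alpha x₁) (S.alpha y₁)) ∧
  (∀ (a : A) (x y : L),
    U.alpha (uceMk φ S a x y) = uceMk φ S (φ a) (S.alpha x) (S.alpha y)) ∧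
  (∀ (a b : A) (x y : L),
    U.rho (uceMk φ S a x y) b = φ a * S.rho (S.bracket x y) b)

/-- `u` is the canonical map `u_L : uce^φ_A L → L`, `(a,x,y) ↦ a • [x,y]`. -/
def IsUceMap (S : HLR R A φ L) (u : UCE φ S → L) : Prop :=
  (∀ ξ η, u (ξ + η) = u ξ + u η) ∧
  (∀ (a : A) (ξ : UCE φ S), u (a • ξ) = a • u ξ) ∧
  (∀ (a : A) (x y : L), u (uceMk φ S a x y) = a • S.bracket x y)

end UceDefs

section MoreDefs

variable {R A : Type} [CommRing R] [CommRing A] [Algebra R A] (φ : A →ₐ[R] A)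

/-- `F` is the homomorphism `uce^φ_A(f)` induced by `f` on universal central extensions. -/
def IsUceFunctorMap {K L : Type}
    [AddCommGroup K] [Module R K] [Module A K] [IsScalarTower R A K]
    [AddCommGroup L] [Module R L] [Module A L] [IsScalarTower R A L]
    (SK : HLR R A φ K) (SL : HLR R A φ L)
    (UK : HLR R A φ (UCE φ SK)) (UL : HLR R A φ (UCE φ SL))
    (f : K → L) (F : UCE φ SK → UCE φ SL) : Prop :=
  IsHLRHom UK UL F ∧
  ∀ (a : A) (x y : K), F (uceMk φ SK a x y) = uceMk φ SL a (f x) (f y)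

/-- `D` is an `α`-derivation of `(L, α_L)` with symbol `σD`. -/
def IsAlphaDeriv {L : Type}
    [AddCommGroup L] [Module R L] [Module A L] [IsScalarTower R A L]
    (S : HLR R A φ L) (D : L → L) (σD : A → A) : Prop :=
  (∀ x y, D (x + y) = D x + D y) ∧
  (∀ (r : R) (x : L), D (r • x) = r • D x) ∧
  (∀ a b, σD (a + b) = σD a + σD b) ∧
  (∀ (r : R) (a : A), σD (r • a) = r • σD a) ∧
  (∀ a b, σD (a * b) = φ a * σD b + φ b * σD a) ∧
  (∀ x, D (S.alpha x) = S.alpha (D x)) ∧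
  (∀ x y, D (S.bracket x y) = S.bracket (D x) (S.alpha y) + S.bracket (S.alpha x) (D y)) ∧
  (∀ a, σD (φ a) = φ (σD a)) ∧
  (∀ (a : A) (x : L), D (a • x) = φ a • D x + σD a • S.alpha x) ∧
  (∀ (x : L) (a : A), σD (S.rho x a) = S.rho (S.alpha x) (σD a) + S.rho (D x) (φ a))

/-- A quasi hom-action of `(L, α_L)` on `(M, α_M)`. -/
def IsQuasiHomAction {L M : Type}
    [AddCommGroup L] [Module R L] [Module A L] [IsScalarTower R A L]
    [AddCommGroup M] [Module R M] [Module A M] [IsScalarTower R A M]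
    (SL : HLR R A φ L) (SM : HLR R A φ M) (act : L → M → M) : Prop :=
  (∀ (x : L) (a : A) (m : M),
      act x (a • m) = φ a • act x m + SL.rho x a • SM.alpha m) ∧
  (∀ (x y : L) (m : M),
      act (SL.bracket x y) (SM.alpha m)
        = act (SL.alpha x) (act y m) - act (SL.alpha y) (act x m)) ∧
  (∀ (x : L) (m n : M),
      act (SL.alpha x) (SM.bracket m n)
        = SM.bracket (act x m) (SM.alpha n) + SM.bracket (SM.alpha m) (act x n)) ∧
  (∀ (x : L) (m : M) (a : A),
      SM.rho (act x m) (φ a)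
        = SL.rho (SL.alpha x) (SM.rho m a) - SM.rho (SM.alpha m) (SL.rho x a)) ∧
  (∀ (x : L) (m : M), SM.alpha (act x m) = act (SL.alpha x) (SM.alpha m))

/-- Compatibility of two quasi hom-actions on each other. -/
def AreCompatibleActions {L M : Type}
    [AddCommGroup L] [Module R L] [Module A L] [IsScalarTower R A L]
    [AddCommGroup M] [Module R M] [Module A M] [IsScalarTower R A M]
    (SL : HLR R A φ L) (SM : HLR R A φ M)
    (actLM : L → M → M) (actML : M → L → L) : Prop :=
  (∀ (x : L) (m : M) (a : A), SM.rho (actLM x m) a = - SL.rho (actML m x) a) ∧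
  (∀ (m : M) (x : L) (n : M), actLM (actML m x) n = SM.bracket n (actLM x m)) ∧
  (∀ (x : L) (m : M) (y : L), actML (actLM x m) y = SL.bracket y (actML m x))

end MoreDefs

section StarDefs

variable {R A : Type} [CommRing R] [CommRing A] [Algebra R A] (φ : A →ₐ[R] A)
variable {L M : Type}
  [AddCommGroup L] [Module R L] [Module A L] [IsScalarTower R A L]
  [AddCommGroup M] [Module R M] [Module A M] [IsScalarTower R A M]

/-- The `A`-submodule of defining relations of the non-abelian tensor product `L ∗ M`,
inside the free `A`-module on the symbols `x ∗ m`. -/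
noncomputable def starRel (SL : HLR R A φ L) (SM : HLR R A φ M)
    (actLM : L → M → M) (actML : M → L → L) : Submodule A ((L × M) →₀ A) :=
  Submodule.span A
    ({t | ∃ (x y : L) (m : M), t =
        Finsupp.single (x + y, m) (1 : A) - Finsupp.single (x, m) 1
          - Finsupp.single (y, m) 1} ∪
     {t | ∃ (r : R) (x : L) (m : M), t =
        Finsupp.single (r • x, m) (1 : A) - r • Finsupp.single (x, m) (1 : A)} ∪
     {t | ∃ (x : L) (m n : M), t =
        Finsupp.single (x, m + n) (1 : A) - Finsupp.single (x, m) 1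
          - Finsupp.single (x, n) 1} ∪
     {t | ∃ (r : R) (x : L) (m : M), t =
        Finsupp.single (x, r • m) (1 : A) - r • Finsupp.single (x, m) (1 : A)} ∪
     {t | ∃ (x y : L) (m : M), t =
        Finsupp.single (SL.bracket x y, SM.alpha m) (1 : A)
          - Finsupp.single (SL.alpha x, actLM y m) 1
          + Finsupp.single (SL.alpha y, actLM x m) 1} ∪
     {t | ∃ (x : L) (m n : M), t =
        Finsupp.single (SL.alpha x, SM.bracket m n) (1 : A)
          - Finsupp.single (actML n x, SM.alpha m) 1
          + Finsupp.single (actML m x, SM.alpha n) 1} ∪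
     {t | ∃ (a b : A) (x y : L) (m n : M), t =
        Finsupp.single (a • actML m x, b • actLM y n) (1 : A)
          + Finsupp.single (b • actML n y, a • actLM x m) 1} ∪
     {t | ∃ (a b : A) (x y : L) (m n : M), t =
        Finsupp.single (a • actML m x, b • actLM y n) (1 : A)
          - φ (a * b) • Finsupp.single (actML m x, actLM y n) (1 : A)
          + (φ a * SM.rho (actLM x m) b) • Finsupp.single (SL.alpha y, SM.alpha n) (1 : A)
          - (φ b * SM.rho (actLM y n) a) • Finsupp.single (SL.alpha x, SM.alpha m) (1 : A)})

/-- The underlying `A`-module of the non-abelian tensor product `L ∗ M`. -/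
abbrev StarMod (SL : HLR R A φ L) (SM : HLR R A φ M)
    (actLM : L → M → M) (actML : M → L → L) : Type :=
  ((L × M) →₀ A) ⧸ starRel φ SL SM actLM actML

/-- The generator `x ∗ m` of `L ∗ M`. -/
noncomputable def starMk (SL : HLR R A φ L) (SM : HLR R A φ M)
    (actLM : L → M → M) (actML : M → L → L) (x : L) (m : M) :
    StarMod φ SL SM actLM actML :=
  Submodule.Quotient.mk (Finsupp.single (x, m) (1 : A))

/-- `U` is the hom-Lie-Rinehart structure of the non-abelian tensor product `L ∗ M`. -/
def IsStarStructure (SL : HLR R A φ L) (SM : HLR R A φ M)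
    (actLM : L → M → M) (actML : M → L → L)
    (U : HLR R A φ (StarMod φ SL SM actLM actML)) : Prop :=
  (∀ (x : L) (m : M),
      U.alpha (starMk φ SL SM actLM actML x m)
        = starMk φ SL SM actLM actML (SL.alpha x) (SM.alpha m)) ∧
  (∀ (a b : A) (x y : L) (m n : M),
      U.bracket (a • starMk φ SL SM actLM actML x m)
          (b • starMk φ SL SM actLM actML y n)
        = - starMk φ SL SM actLM actML (a • actML m x) (b • actLM y n)) ∧
  (∀ (x : L) (m : M) (a : A),
      U.rho (starMk φ SL SM actLM actML x m) a = SM.rho (actLM x m) a)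

/-- A hom-Lie-Rinehart pairing of `(L, α_L)` and `(M, α_M)` into `(N, α_N)`. -/
def IsHLRPairing {N : Type}
    [AddCommGroup N] [Module R N] [Module A N] [IsScalarTower R A N]
    (SL : HLR R A φ L) (SM : HLR R A φ M) (SN : HLR R A φ N)
    (actLM : L → M → M) (actML : M → L → L) (f : L → M → N) : Prop :=
  (∀ (x y : L) (m : M), f (x + y) m = f x m + f y m) ∧
  (∀ (r : R) (x : L) (m : M), f (r • x) m = r • f x m) ∧
  (∀ (x : L) (m n : M), f x (m + n) = f x m + f x n) ∧
  (∀ (r : R) (x : L) (m : M), f x (r • m) = r • f x m) ∧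
  (∀ (x : L) (m : M) (a : A), SN.rho (f x m) a = SM.rho (actLM x m) a) ∧
  (∀ (x y : L) (m : M),
      f (SL.bracket x y) (SM.alpha m)
        = f (SL.alpha x) (actLM y m) - f (SL.alpha y) (actLM x m)) ∧
  (∀ (x : L) (m n : M),
      f (SL.alpha x) (SM.bracket m n)
        = f (actML n x) (SM.alpha m) - f (actML m x) (SM.alpha n)) ∧
  (∀ (x : L) (m : M), f (SL.alpha x) (SM.alpha m) = SN.alpha (f x m)) ∧
  (∀ (a b : A) (x y : L) (m n : M),
      f (a • actML m x) (b • actLM y n)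
        = - (φ (a * b) • SN.bracket (f x m) (f y n))
          - (φ a * SN.rho (f x m) b) • SN.alpha (f y n)
          + (φ b * SN.rho (f y n) a) • SN.alpha (f x m))

end StarDefs

/-!
`L ∗ M` is the free `A`-module on the symbols `x ∗ m` modulo precisely the identities that a
hom-Lie-Rinehart pairing has to satisfy, and the twist map, bracket and anchor of `L ∗ M` are
prescribed on the `A`-module generators `a • (x ∗ m)`. Hence `(x, m) ↦ x ∗ m` is a pairing, and
a pairing `g` factors through the quotient as an `A`-linear map sending `x ∗ m` to `g x m`; it
respects twist maps, anchors and brackets because it does so on generators, and it is unique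
because the `x ∗ m` span `L ∗ M`.
-/

namespace HLR

variable {R A : Type} [CommRing R] [CommRing A] [Algebra R A] {φ : A →ₐ[R] A}
  {L : Type} [AddCommGroup L] [Module R L] [Module A L] [IsScalarTower R A L]
  (S : HLR R A φ L)

theorem alpha_zero : S.alpha 0 = 0 := by
  simpa using S.alpha_add 0 0

theorem bracket_zero_left (y : L) : S.bracket 0 y = 0 := by
  simpa using S.add_left 0 0 y

theorem bracket_zero_right (x : L) : S.bracket x 0 = 0 := by
  rw [S.skew, bracket_zero_left, neg_zero]

theorem rho_zero_left (a : A) : S.rho 0 a = 0 := by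
  simpa using S.rho_add_left 0 0 a

theorem rho_one (x : L) : S.rho x 1 = 0 := by
  simpa using S.rho_deriv x 1 1

theorem bracket_smul_smul (a b : A) (u v : L) :
    S.bracket (a • u) (b • v) =
      φ (a * b) • S.bracket u v + (φ a * S.rho u b) • S.alpha v
        - (φ b * S.rho v a) • S.alpha u := by
  rw [S.leibniz (a • u) b v, S.skew (a • u) v, S.leibniz v a u, S.rho_smulA,
    S.skew v u, map_mul]
  simp only [smul_neg, smul_add, smul_smul, neg_add, neg_neg, mul_comm (φ b) (φ a)]
  abel

end HLR

section StarMod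

variable {R A : Type} [CommRing R] [CommRing A] [Algebra R A] {φ : A →ₐ[R] A}
  {L M : Type}
  [AddCommGroup L] [Module R L] [Module A L] [IsScalarTower R A L]
  [AddCommGroup M] [Module R M] [Module A M] [IsScalarTower R A M]
  {SL : HLR R A φ L} {SM : HLR R A φ M} {actLM : L → M → M} {actML : M → L → L}

-- Binds tighter than `•`: `a • x ∗ m` is `a • (x ∗ m)`.
local notation:75 x:76 " ∗ " m:76 => starMk φ SL SM actLM actML x m

theorem mk_single_eq_smul_starMk (x : L) (m : M) (a : A) :
    (Submodule.Quotient.mk (Finsupp.single (x, m) a) : StarMod φ SL SM actLM actML) =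
      a • x ∗ m := by
  rw [starMk, ← Submodule.Quotient.mk_smul, Finsupp.smul_single, smul_eq_mul, mul_one]

theorem starMk_add_left (x y : L) (m : M) : (x + y) ∗ m = x ∗ m + y ∗ m := by
  rw [← sub_eq_zero, ← sub_sub]
  exact (Submodule.Quotient.mk_eq_zero _).mpr <| Submodule.subset_span <|
    Or.inl <| Or.inl <| Or.inl <| Or.inl <| Or.inl <| Or.inl <| Or.inl ⟨x, y, m, rfl⟩

theorem starMk_smul_left (r : R) (x : L) (m : M) : (r • x) ∗ m = r • x ∗ m := by
  rw [← sub_eq_zero]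
  exact (Submodule.Quotient.mk_eq_zero _).mpr <| Submodule.subset_span <|
    Or.inl <| Or.inl <| Or.inl <| Or.inl <| Or.inl <| Or.inl <| Or.inr ⟨r, x, m, rfl⟩

theorem starMk_add_right (x : L) (m n : M) : x ∗ (m + n) = x ∗ m + x ∗ n := by
  rw [← sub_eq_zero, ← sub_sub]
  exact (Submodule.Quotient.mk_eq_zero _).mpr <| Submodule.subset_span <|
    Or.inl <| Or.inl <| Or.inl <| Or.inl <| Or.inl <| Or.inr ⟨x, m, n, rfl⟩

theorem starMk_smul_right (r : R) (x : L) (m : M) : x ∗ (r • m) = r • x ∗ m := by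
  rw [← sub_eq_zero]
  exact (Submodule.Quotient.mk_eq_zero _).mpr <| Submodule.subset_span <|
    Or.inl <| Or.inl <| Or.inl <| Or.inl <| Or.inr ⟨r, x, m, rfl⟩

theorem starMk_bracket_alpha (x y : L) (m : M) :
    SL.bracket x y ∗ SM.alpha m = SL.alpha x ∗ actLM y m - SL.alpha y ∗ actLM x m := by
  rw [← sub_eq_zero, ← sub_add]
  exact (Submodule.Quotient.mk_eq_zero _).mpr <| Submodule.subset_span <|
    Or.inl <| Or.inl <| Or.inl <| Or.inr ⟨x, y, m, rfl⟩

theorem starMk_alpha_bracket (x : L) (m n : M) :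
    SL.alpha x ∗ SM.bracket m n = actML n x ∗ SM.alpha m - actML m x ∗ SM.alpha n := by
  rw [← sub_eq_zero, ← sub_add]
  exact (Submodule.Quotient.mk_eq_zero _).mpr <| Submodule.subset_span <|
    Or.inl <| Or.inl <| Or.inr ⟨x, m, n, rfl⟩

theorem starMk_smul_smul (a b : A) (x y : L) (m n : M) :
    (a • actML m x) ∗ (b • actLM y n) = φ (a * b) • actML m x ∗ actLM y n
      - (φ a * SM.rho (actLM x m) b) • SL.alpha y ∗ SM.alpha n
      + (φ b * SM.rho (actLM y n) a) • SL.alpha x ∗ SM.alpha m := by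
  rw [← sub_eq_zero, sub_add_eq_sub_sub, ← sub_add]
  exact (Submodule.Quotient.mk_eq_zero _).mpr <| Submodule.subset_span <|
    Or.inr ⟨a, b, x, y, m, n, rfl⟩

@[elab_as_elim]
theorem StarMod.induction_on {P : StarMod φ SL SM actLM actML → Prop}
    (ξ : StarMod φ SL SM actLM actML) (zero : P 0)
    (smul_starMk_add : ∀ (a : A) (x : L) (m : M) ξ, P ξ → P (a • x ∗ m + ξ)) : P ξ := by
  obtain ⟨f, rfl⟩ := Submodule.Quotient.mk_surjective _ ξ
  induction f using Finsupp.induction with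
  | zero => exact zero
  | single_add p a f _ _ ih =>
    rw [Submodule.Quotient.mk_add, mk_single_eq_smul_starMk]
    exact smul_starMk_add a p.1 p.2 _ ih

variable {U : HLR R A φ (StarMod φ SL SM actLM actML)}

namespace IsStarStructure

variable (hU : IsStarStructure φ SL SM actLM actML U)
include hU

theorem alpha_starMk (x : L) (m : M) : U.alpha (x ∗ m) = SL.alpha x ∗ SM.alpha m :=
  hU.1 x m

theorem bracket_smul_starMk (a b : A) (x y : L) (m n : M) :
    U.bracket (a • x ∗ m) (b • y ∗ n) = -((a • actML m x) ∗ (b • actLM y n)) :=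
  hU.2.1 a b x y m n

theorem rho_starMk (x : L) (m : M) (a : A) : U.rho (x ∗ m) a = SM.rho (actLM x m) a :=
  hU.2.2 x m a

theorem bracket_starMk (x y : L) (m n : M) :
    U.bracket (x ∗ m) (y ∗ n) = -(actML m x ∗ actLM y n) := by
  simpa using hU.bracket_smul_starMk 1 1 x y m n

end IsStarStructure

theorem isHLRPairing_starMk (hU : IsStarStructure φ SL SM actLM actML U) :
    IsHLRPairing φ SL SM U actLM actML (starMk φ SL SM actLM actML) := by
  refine ⟨starMk_add_left, starMk_smul_left, starMk_add_right, starMk_smul_right,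
    hU.rho_starMk, starMk_bracket_alpha, starMk_alpha_bracket,
    fun x m => (hU.alpha_starMk x m).symm, fun a b x y m n => ?_⟩
  rw [starMk_smul_smul, hU.bracket_starMk, hU.rho_starMk, hU.rho_starMk, hU.alpha_starMk,
    hU.alpha_starMk, smul_neg, neg_neg]

variable {N : Type} [AddCommGroup N] [Module R N] [Module A N] [IsScalarTower R A N]
  {SN : HLR R A φ N} {g : L → M → N}

namespace IsHLRPairing

theorem rho_apply (hg : IsHLRPairing φ SL SM SN actLM actML g) (x : L) (m : M) (a : A) :
    SN.rho (g x m) a = SM.rho (actLM x m) a :=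
  hg.2.2.2.2.1 x m a

theorem apply_alpha_alpha (hg : IsHLRPairing φ SL SM SN actLM actML g) (x : L) (m : M) :
    g (SL.alpha x) (SM.alpha m) = SN.alpha (g x m) :=
  hg.2.2.2.2.2.2.2.1 x m

theorem apply_smul_act_smul_act (hg : IsHLRPairing φ SL SM SN actLM actML g)
    (a b : A) (x y : L) (m n : M) :
    g (a • actML m x) (b • actLM y n)
      = -(φ (a * b) • SN.bracket (g x m) (g y n))
        - (φ a * SN.rho (g x m) b) • SN.alpha (g y n)
        + (φ b * SN.rho (g y n) a) • SN.alpha (g x m) :=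
  hg.2.2.2.2.2.2.2.2 a b x y m n

theorem apply_act_act (hg : IsHLRPairing φ SL SM SN actLM actML g) (x y : L) (m n : M) :
    g (actML m x) (actLM y n) = -SN.bracket (g x m) (g y n) := by
  simpa [SN.rho_one] using hg.apply_smul_act_smul_act 1 1 x y m n

theorem starRel_le_ker (hg : IsHLRPairing φ SL SM SN actLM actML g) :
    starRel φ SL SM actLM actML ≤
      LinearMap.ker (Finsupp.linearCombination A fun p : L × M => g p.1 p.2) := by
  have ⟨add_left, smul_left, add_right, smul_right, _, bracket_alpha, alpha_bracket, _, _⟩ := hg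
  rw [starRel, Submodule.span_le]
  rintro t (((((((⟨x, y, m, rfl⟩ | ⟨r, x, m, rfl⟩) | ⟨x, m, n, rfl⟩) | ⟨r, x, m, rfl⟩) |
    ⟨x, y, m, rfl⟩) | ⟨x, m, n, rfl⟩) | ⟨a, b, x, y, m, n, rfl⟩) | ⟨a, b, x, y, m, n, rfl⟩)
  all_goals simp only [SetLike.mem_coe, LinearMap.mem_ker, map_add, map_sub, map_smul,
    LinearMap.map_smul_of_tower, Finsupp.linearCombination_single, one_smul]
  · rw [add_left]; abel
  · rw [smul_left]; abel
  · rw [add_right]; abel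
  · rw [smul_right]; abel
  · rw [bracket_alpha]; abel
  · rw [alpha_bracket]; abel
  · rw [hg.apply_smul_act_smul_act, hg.apply_smul_act_smul_act, mul_comm b a, SN.skew (g y n)]
    simp only [smul_neg, neg_neg]
    abel
  · rw [hg.apply_smul_act_smul_act, hg.apply_act_act, hg.apply_alpha_alpha, hg.apply_alpha_alpha,
      hg.rho_apply, hg.rho_apply]
    simp only [smul_neg]
    abel

variable (hg : IsHLRPairing φ SL SM SN actLM actML g)
include hg

noncomputable def lift : StarMod φ SL SM actLM actML →ₗ[A] N :=
  (starRel φ SL SM actLM actML).liftQ _ hg.starRel_le_ker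

theorem lift_starMk (x : L) (m : M) : hg.lift (x ∗ m) = g x m := by
  rw [lift, starMk, Submodule.liftQ_apply, Finsupp.linearCombination_single, one_smul]

variable (hU : IsStarStructure φ SL SM actLM actML U)
include hU

theorem lift_alpha (ξ : StarMod φ SL SM actLM actML) :
    hg.lift (U.alpha ξ) = SN.alpha (hg.lift ξ) := by
  induction ξ using StarMod.induction_on with
  | zero => rw [U.alpha_zero, map_zero, SN.alpha_zero]
  | smul_starMk_add a x m ξ ih =>
    rw [U.alpha_add, U.alpha_smulA, hU.alpha_starMk, map_add, map_smul, ih, hg.lift_starMk,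
      hg.apply_alpha_alpha, map_add, map_smul, hg.lift_starMk, SN.alpha_add, SN.alpha_smulA]

theorem rho_lift (ξ : StarMod φ SL SM actLM actML) (c : A) :
    SN.rho (hg.lift ξ) c = U.rho ξ c := by
  induction ξ using StarMod.induction_on with
  | zero => rw [map_zero, SN.rho_zero_left, U.rho_zero_left]
  | smul_starMk_add a x m ξ ih =>
    rw [map_add, map_smul, SN.rho_add_left, SN.rho_smulA, hg.lift_starMk, hg.rho_apply, ih,
      U.rho_add_left, U.rho_smulA, hU.rho_starMk]

theorem lift_bracket_smul_starMk (a b : A) (x y : L) (m n : M) :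
    hg.lift (U.bracket (a • x ∗ m) (b • y ∗ n)) =
      SN.bracket (hg.lift (a • x ∗ m)) (hg.lift (b • y ∗ n)) := by
  rw [hU.bracket_smul_starMk, map_neg, hg.lift_starMk, hg.apply_smul_act_smul_act, map_smul,
    map_smul, hg.lift_starMk, hg.lift_starMk, SN.bracket_smul_smul]
  simp only [neg_sub, neg_add_rev]
  abel

theorem lift_bracket (ξ η : StarMod φ SL SM actLM actML) :
    hg.lift (U.bracket ξ η) = SN.bracket (hg.lift ξ) (hg.lift η) := by
  induction ξ using StarMod.induction_on generalizing η with
  | zero => rw [U.bracket_zero_left, map_zero, SN.bracket_zero_left]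
  | smul_starMk_add a x m ξ ih =>
    rw [U.add_left, map_add, ih, map_add, SN.add_left, add_left_inj]
    induction η using StarMod.induction_on with
    | zero => rw [U.bracket_zero_right, map_zero, SN.bracket_zero_right]
    | smul_starMk_add b y n η ih' =>
      rw [U.add_right, map_add, ih', map_add, SN.add_right, hg.lift_bracket_smul_starMk hU]

theorem isHLRHom_lift : IsHLRHom U SN hg.lift :=
  ⟨map_add hg.lift, map_smul hg.lift, hg.lift_bracket hU, hg.lift_alpha hU, hg.rho_lift hU⟩

omit hU in
theorem lift_unique {Φ : StarMod φ SL SM actLM actML → N} (hΦ : IsHLRHom U SN Φ)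
    (hΦg : ∀ (x : L) (m : M), Φ (x ∗ m) = g x m) : Φ = hg.lift := by
  obtain ⟨hadd, hsmul, -, -, -⟩ := hΦ
  funext ξ
  induction ξ using StarMod.induction_on with
  | zero => simpa using hadd 0 0
  | smul_starMk_add a x m ξ ih =>
    rw [hadd, hsmul, hΦg, ih, map_add, map_smul, hg.lift_starMk]

end IsHLRPairing

end StarMod

theorem statement_17_general
    {R A : Type} [CommRing R] [CommRing A] [Algebra R A] (φ : A →ₐ[R] A)
    {L M : Type}
    [AddCommGroup L] [Module R L] [Module A L] [IsScalarTower R A L]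
    [AddCommGroup M] [Module R M] [Module A M] [IsScalarTower R A M]
    (SL : HLR R A φ L) (SM : HLR R A φ M)
    (actLM : L → M → M) (actML : M → L → L)
    (U : HLR R A φ (StarMod φ SL SM actLM actML))
    (hU : IsStarStructure φ SL SM actLM actML U) :
    IsHLRPairing φ SL SM U actLM actML (starMk φ SL SM actLM actML) ∧
    ∀ (N : Type)
      [AddCommGroup N] [Module R N] [Module A N] [IsScalarTower R A N]
      (SN : HLR R A φ N) (g : L → M → N),
      IsHLRPairing φ SL SM SN actLM actML g →
      ∃! Φ : StarMod φ SL SM actLM actML → N,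
        IsHLRHom U SN Φ ∧ ∀ (x : L) (m : M), Φ (starMk φ SL SM actLM actML x m) = g x m :=
  ⟨isHLRPairing_starMk hU, fun _ _ _ _ _ _ _ hg =>
    ⟨hg.lift, ⟨hg.isHLRHom_lift hU, hg.lift_starMk⟩, fun _ ⟨hΦ, hΦg⟩ => hg.lift_unique hΦ hΦg⟩⟩

/-- `(x, m) ↦ x ∗ m` is a universal hom-Lie-Rinehart pairing: it is a
hom-Lie-Rinehart pairing into `L ∗ M` and every hom-Lie-Rinehart pairing factors uniquely
through it via a homomorphism of hom-Lie-Rinehart algebras over `(A, φ)`. -/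
theorem statement_17
    {R A : Type} [CommRing R] [CommRing A] [Algebra R A] (φ : A →ₐ[R] A)
    {L M : Type}
    [AddCommGroup L] [Module R L] [Module A L] [IsScalarTower R A L]
    [AddCommGroup M] [Module R M] [Module A M] [IsScalarTower R A M]
    (SL : HLR R A φ L) (SM : HLR R A φ M)
    (actLM : L → M → M) (actML : M → L → L)
    (hLM : IsQuasiHomAction φ SL SM actLM)
    (hML : IsQuasiHomAction φ SM SL actML)
    (hcomp : AreCompatibleActions φ SL SM actLM actML)
    (U : HLR R A φ (StarMod φ SL SM actLM actML))
    (hU : IsStarStructure φ SL SM actLM actML U) :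
    IsHLRPairing φ SL SM U actLM actML (starMk φ SL SM actLM actML) ∧
    ∀ (N : Type)
      [AddCommGroup N] [Module R N] [Module A N] [IsScalarTower R A N]
      (SN : HLR R A φ N) (g : L → M → N),
      IsHLRPairing φ SL SM SN actLM actML g →
      ∃! Φ : StarMod φ SL SM actLM actML → N,
        IsHLRHom U SN Φ ∧ ∀ (x : L) (m : M), Φ (starMk φ SL SM actLM actML x m) = g x m :=
  statement_17_general φ SL SM actLM actML U hU
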